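/- arXiv:2512.00702 — 2 statements merged into one kernel-verified Lean document; each statement's English description precedes it below -/
import Mathlib

section
/- Let G be a minimal prime graph complement with a vertex X of degree 2 having neighbors A and B. Then any two vertices of S_A = {v ≠ X : v adjacent to A, not adjacent to B} have exactly the same set of neighbors in G; the same holds within S_B = {v ≠ X : v adjacent to B, not adjacent to A}; and every vertex of S_Y = {v ≠ X : v adjacent to both A and B} has the same neighborhood as X. -/
private lemma tri3 {V : Type*} {G : SimpleGraph V} (htf : G.CliqueFree 3) {x y z : V}
    (h1 : G.Adj x y) (h2 : G.Adj x z) (h3 : G.Adj y z) : False := by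
  classical
  exact htf {x, y, z} (SimpleGraph.is3Clique_triple_iff.mpr ⟨h1, h2, h3⟩)

private lemma addEdge_adj {V : Type*} {G : SimpleGraph V} {u v a b : V}
    (h : (G ⊔ SimpleGraph.fromEdgeSet {s(u, v)}).Adj a b) :
    G.Adj a b ∨ (a = u ∧ b = v) ∨ (a = v ∧ b = u) := by
  rcases h with h | h
  · exact Or.inl h
  · rw [SimpleGraph.fromEdgeSet_adj] at h
    have h1 := h.1
    simp only [Set.mem_singleton_iff, Sym2.eq_iff] at h1
    exact Or.inr h1

private lemma addEdge_colorable {V : Type*} {G : SimpleGraph V} {u v : V}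
    (c : G.Coloring (Fin 3)) (hne : c u ≠ c v) :
    (G ⊔ SimpleGraph.fromEdgeSet {s(u, v)}).Colorable 3 :=
  ⟨SimpleGraph.Coloring.mk (fun x => c x) (fun {a b} hab => by
    rcases addEdge_adj hab with h | ⟨rfl, rfl⟩ | ⟨rfl, rfl⟩
    · exact c.valid h
    · exact hne
    · exact fun h => hne h.symm)⟩

private lemma addEdge_cliqueFree {V : Type*} {G : SimpleGraph V} (htf : G.CliqueFree 3)
    {u v : V} (hcom : ∀ z, G.Adj u z → G.Adj v z → False) :
    (G ⊔ SimpleGraph.fromEdgeSet {s(u, v)}).CliqueFree 3 := by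
  classical
  intro S hS
  obtain ⟨x, y, z, hxy, hxz, hyz, rfl⟩ := SimpleGraph.is3Clique_iff.mp hS
  have nxy := hxy.ne
  have nxz := hxz.ne
  have nyz := hyz.ne
  rcases addEdge_adj hxy with h1 | h1
  · rcases addEdge_adj hxz with h2 | h2
    · rcases addEdge_adj hyz with h3 | h3
      · exact tri3 htf h1 h2 h3
      · rcases h3 with ⟨rfl, rfl⟩ | ⟨rfl, rfl⟩
        · exact hcom x h1.symm h2.symm
        · exact hcom x h2.symm h1.symm
    · rcases addEdge_adj hyz with h3 | h3
      · rcases h2 with ⟨rfl, rfl⟩ | ⟨rfl, rfl⟩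
        · exact hcom y h1 h3.symm
        · exact hcom y h3.symm h1
      · rcases h2 with ⟨hxu, hzv⟩ | ⟨hxv, hzu⟩ <;>
          rcases h3 with ⟨hyu, hzv'⟩ | ⟨hyv, hzu'⟩
        · exact nxy (hxu.trans hyu.symm)
        · exact nxz (hxu.trans hzu'.symm)
        · exact nxz (hxv.trans hzv'.symm)
        · exact nxy (hxv.trans hyv.symm)
  · rcases addEdge_adj hxz with h2 | h2
    · rcases addEdge_adj hyz with h3 | h3
      · rcases h1 with ⟨rfl, rfl⟩ | ⟨rfl, rfl⟩
        · exact hcom z h2 h3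
        · exact hcom z h3 h2
      · rcases h1 with ⟨hxu, hyv⟩ | ⟨hxv, hyu⟩ <;>
          rcases h3 with ⟨hyu', hzv'⟩ | ⟨hyv', hzu'⟩
        · exact nxy (hxu.trans hyu'.symm)
        · exact nxz (hxu.trans hzu'.symm)
        · exact nxz (hxv.trans hzv'.symm)
        · exact nxy (hxv.trans hyv'.symm)
    · rcases h1 with ⟨hxu, hyv⟩ | ⟨hxv, hyu⟩ <;>
        rcases h2 with ⟨hxu', hzv'⟩ | ⟨hxv', hzu'⟩
      · exact nyz (hyv.trans hzv'.symm)
      · exact nxy (hxv'.trans hyv.symm)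
      · exact nxy (hxu'.trans hyu.symm)
      · exact nyz (hyu.trans hzu'.symm)

private lemma forcedEq {V : Type*} {G : SimpleGraph V} (htf : G.CliqueFree 3)
    (hmax : ∀ u v : V, u ≠ v → ¬ G.Adj u v →
      ¬ ((G ⊔ SimpleGraph.fromEdgeSet {s(u, v)}).CliqueFree 3 ∧
         (G ⊔ SimpleGraph.fromEdgeSet {s(u, v)}).Colorable 3))
    {u v : V} (huv : u ≠ v) (hnadj : ¬ G.Adj u v)
    (hcom : ∀ z, G.Adj u z → G.Adj v z → False)
    (c : G.Coloring (Fin 3)) : c u = c v := by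
  by_contra hne
  exact hmax u v huv hnadj ⟨addEdge_cliqueFree htf hcom, addEdge_colorable c hne⟩
private lemma P1lem {V : Type*} {G : SimpleGraph V} (htf : G.CliqueFree 3)
    (hmax : ∀ u v : V, u ≠ v → ¬ G.Adj u v →
      ¬ ((G ⊔ SimpleGraph.fromEdgeSet {s(u, v)}).CliqueFree 3 ∧
         (G ⊔ SimpleGraph.fromEdgeSet {s(u, v)}).Colorable 3))
    {X A B : V} (hdeg : ∀ v, G.Adj X v → v = A ∨ v = B)
    {w : V} (h1 : w ≠ X) (h2 : w ≠ A) (h3 : w ≠ B)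
    (h4 : ¬ G.Adj w A) (h5 : ¬ G.Adj w B)
    (c : G.Coloring (Fin 3)) : c w = c X := by
  have hnadj : ¬ G.Adj X w := fun h => by
    rcases hdeg w h with rfl | rfl
    · exact h2 rfl
    · exact h3 rfl
  have hcom : ∀ z, G.Adj X z → G.Adj w z → False := fun z hXz hwz => by
    rcases hdeg z hXz with rfl | rfl
    · exact h4 hwz
    · exact h5 hwz
  exact (forcedEq htf hmax (fun h => h1 h.symm) hnadj hcom c).symm

private lemma coreY {V : Type*} {G : SimpleGraph V} (htf : G.CliqueFree 3)
    (hcol : G.Colorable 3)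
    (hmax : ∀ u v : V, u ≠ v → ¬ G.Adj u v →
      ¬ ((G ⊔ SimpleGraph.fromEdgeSet {s(u, v)}).CliqueFree 3 ∧
         (G ⊔ SimpleGraph.fromEdgeSet {s(u, v)}).Colorable 3))
    {X A B : V} (hXA : G.Adj X A) (hXB : G.Adj X B)
    (hdeg : ∀ v, G.Adj X v → v = A ∨ v = B) :
    ∀ y : V, y ≠ X → G.Adj y A → G.Adj y B → ∀ w : V, G.Adj y w ↔ G.Adj X w := by
  classical
  obtain ⟨c0⟩ := hcol
  intro y hyX hyA hyB w
  constructor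
  · intro hyw
    have hmem : w = A ∨ w = B := by
      by_contra hc
      push_neg at hc
      obtain ⟨hwA, hwB⟩ := hc
      have hnwA : ¬ G.Adj w A := fun h => tri3 htf hyw hyA h
      have hnwB : ¬ G.Adj w B := fun h => tri3 htf hyw hyB h
      have hwX : w ≠ X := by
        rintro rfl
        rcases hdeg y hyw.symm with rfl | rfl
        · exact G.irrefl hyA
        · exact G.irrefl hyB
      have hP := P1lem htf hmax hdeg hwX hwA hwB hnwA hnwB
      have cval : ∀ {p q : V}, G.Adj p q →
          (fun x => if x = X then c0 y else c0 x) p ≠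
          (fun x => if x = X then c0 y else c0 x) q := by
        intro p q hpq
        by_cases hp : p = X <;> by_cases hq : q = X
        · subst hp; subst hq; exact absurd hpq (G.irrefl)
        · subst hp
          simp only [if_pos rfl, if_neg hq]
          rcases hdeg q hpq with rfl | rfl
          · exact c0.valid hyA
          · exact c0.valid hyB
        · subst hq
          simp only [if_pos rfl, if_neg hp]
          rcases hdeg p hpq.symm with rfl | rfl
          · exact fun h => (c0.valid hyA) h.symm
          · exact fun h => (c0.valid hyB) h.symm
        · simp only [if_neg hp, if_neg hq]
          exact c0.valid hpq
      have hres := hP (SimpleGraph.Coloring.mk _ cval)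
      change (if w = X then c0 y else c0 w) = (if X = X then c0 y else c0 X) at hres
      rw [if_neg hwX, if_pos rfl] at hres
      exact c0.valid hyw hres.symm
    rcases hmem with rfl | rfl
    · exact hXA
    · exact hXB
  · intro hXw
    rcases hdeg w hXw with rfl | rfl
    · exact hyA
    · exact hyB
private lemma coreA {V : Type*} {G : SimpleGraph V} (htf : G.CliqueFree 3)
    (hcol : G.Colorable 3)
    (hmax : ∀ u v : V, u ≠ v → ¬ G.Adj u v →
      ¬ ((G ⊔ SimpleGraph.fromEdgeSet {s(u, v)}).CliqueFree 3 ∧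
         (G ⊔ SimpleGraph.fromEdgeSet {s(u, v)}).Colorable 3))
    {X A B : V} (hXA : G.Adj X A) (hXB : G.Adj X B)
    (hdeg : ∀ v, G.Adj X v → v = A ∨ v = B) :
    ∀ a b w : V, a ≠ X → G.Adj a A → ¬ G.Adj a B →
      b ≠ X → G.Adj b A → ¬ G.Adj b B → G.Adj a w → G.Adj b w := by
  classical
  obtain ⟨c0⟩ := hcol
  have hnAB : ¬ G.Adj A B := fun h => tri3 htf hXA hXB h
  -- the canonical coloring
  set f : V → Fin 3 := fun v => if G.Adj v A ∨ v = X then 1 else if G.Adj v B then 2 else 0 with hf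
  have fval : ∀ {p q : V}, G.Adj p q → f p ≠ f q := by
    intro p q hpq
    by_cases hp1 : G.Adj p A ∨ p = X <;> by_cases hq1 : G.Adj q A ∨ q = X
    · exfalso
      rcases hp1 with hp | rfl <;> rcases hq1 with hq | hq
      · exact tri3 htf hpq hp hq
      · subst hq
        rcases hdeg p hpq.symm with rfl | rfl
        · exact G.irrefl hp
        · exact hnAB hp.symm
      · rcases hdeg q hpq with rfl | rfl
        · exact G.irrefl hq
        · exact hnAB hq.symm
      · subst hq; exact G.irrefl hpq
    · simp only [hf, if_pos hp1, if_neg hq1]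
      split_ifs <;> decide
    · simp only [hf, if_pos hq1, if_neg hp1]
      split_ifs <;> decide
    · push_neg at hp1 hq1
      obtain ⟨hpA, hpX⟩ := hp1
      obtain ⟨hqA, hqX⟩ := hq1
      simp only [hf, if_neg (not_or.mpr ⟨hpA, hpX⟩), if_neg (not_or.mpr ⟨hqA, hqX⟩)]
      by_cases hpB : G.Adj p B <;> by_cases hqB : G.Adj q B
      · exact absurd (tri3 htf hpq hpB hqB) not_false
      · simp only [if_pos hpB, if_neg hqB]; decide
      · simp only [if_pos hqB, if_neg hpB]; decide
      · exfalso
        have hpA' : p ≠ A := fun h => hqA (h ▸ hpq).symm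
        have hpB' : p ≠ B := fun h => hqB (h ▸ hpq).symm
        have hqA' : q ≠ A := fun h => hpA (h ▸ hpq)
        have hqB' : q ≠ B := fun h => hpB (h ▸ hpq)
        have e1 := P1lem htf hmax hdeg hpX hpA' hpB' hpA hpB c0
        have e2 := P1lem htf hmax hdeg hqX hqA' hqB' hqA hqB c0
        exact c0.valid hpq (e1.trans e2.symm)
  set cs : G.Coloring (Fin 3) := SimpleGraph.Coloring.mk f fval with hcs
  have csapp : ∀ v, cs v = if G.Adj v A ∨ v = X then 1 else if G.Adj v B then 2 else 0 :=
    fun v => rfl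
  -- no vertex is nonadjacent to both A and B (other than X, A, B)
  have hW : ∀ w, w ≠ X → w ≠ A → w ≠ B → ¬ G.Adj w A → ¬ G.Adj w B → False := by
    intro w h1 h2 h3 h4 h5
    have hP := P1lem htf hmax hdeg h1 h2 h3 h4 h5 cs
    rw [csapp, csapp] at hP
    rw [if_neg (not_or.mpr ⟨h4, h1⟩), if_neg h5,
      if_pos (show G.Adj X A ∨ X = X from Or.inr rfl)] at hP
    exact absurd hP (by decide)
  -- every S_A vertex is adjacent to every S_B vertex
  have hSASB : ∀ p q, p ≠ X → G.Adj p A → ¬ G.Adj p B →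
      q ≠ X → G.Adj q B → ¬ G.Adj q A → G.Adj p q := by
    intro p q hpX hpA hpB hqX hqB hqA
    by_contra hn
    have hpq : p ≠ q := fun h => hqA (h ▸ hpA)
    apply hmax p q hpq hn
    constructor
    · apply addEdge_cliqueFree htf
      intro z hpz hqz
      have hzA : ¬ G.Adj z A := fun h => tri3 htf hpz hpA h
      have hzB : ¬ G.Adj z B := fun h => tri3 htf hqz hqB h
      have hzA' : z ≠ A := fun h => hqA (h ▸ hqz)
      have hzB' : z ≠ B := fun h => hpB (h ▸ hpz)
      have hzX : z ≠ X := by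
        rintro rfl
        rcases hdeg p hpz.symm with rfl | rfl
        · exact G.irrefl hpA
        · exact hnAB hpA.symm
      exact hW z hzX hzA' hzB' hzA hzB
    · apply addEdge_colorable cs
      rw [csapp, csapp]
      rw [if_pos (show G.Adj p A ∨ p = X from Or.inl hpA),
        if_neg (not_or.mpr ⟨hqA, hqX⟩), if_pos hqB]
      decide
  -- the monotone statement
  intro a b w haX haA haB hbX hbA hbB haw
  by_cases hwA : w = A
  · subst hwA; exact hbA
  · have hnwA : ¬ G.Adj w A := fun h => tri3 htf haw haA h
    have hwX : w ≠ X := by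
      rintro rfl
      rcases hdeg a haw.symm with rfl | rfl
      · exact G.irrefl haA
      · exact hnAB haA.symm
    have hwB' : w ≠ B := fun h => haB (h ▸ haw)
    by_cases hwB : G.Adj w B
    · exact hSASB b w hbX hbA hbB hwX hwB hnwA
    · exact (hW w hwX hwA hwB' hnwA hwB).elim

/-- A minimal prime graph complement: a graph on at least 2 vertices that is
triangle-free, 3-colorable, edge-maximal with respect to these properties,
and whose complement is connected. -/
def IsMinimalPrimeGraphComplement {V : Type*} [Fintype V] (G : SimpleGraph V) : Prop :=
  Nontrivial V ∧ G.CliqueFree 3 ∧ G.Colorable 3 ∧ Gᶜ.Connected ∧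
    ∀ u v : V, u ≠ v → ¬ G.Adj u v →
      ¬ ((G ⊔ SimpleGraph.fromEdgeSet {s(u, v)}).CliqueFree 3 ∧
         (G ⊔ SimpleGraph.fromEdgeSet {s(u, v)}).Colorable 3)

theorem duplicate_classes {V : Type*} [Fintype V] (G : SimpleGraph V)
    (hG : IsMinimalPrimeGraphComplement G) (X A B : V)
    (hXA : G.Adj X A) (hXB : G.Adj X B) (hAB : A ≠ B)
    (hdeg : ∀ v, G.Adj X v → v = A ∨ v = B) :
    (∀ a b : V, a ≠ X → G.Adj a A → ¬ G.Adj a B →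
        b ≠ X → G.Adj b A → ¬ G.Adj b B → ∀ w : V, G.Adj a w ↔ G.Adj b w) ∧
    (∀ a b : V, a ≠ X → G.Adj a B → ¬ G.Adj a A →
        b ≠ X → G.Adj b B → ¬ G.Adj b A → ∀ w : V, G.Adj a w ↔ G.Adj b w) ∧
    (∀ y : V, y ≠ X → G.Adj y A → G.Adj y B → ∀ w : V, G.Adj y w ↔ G.Adj X w) := by
  obtain ⟨-, htf, hcol, -, hmax⟩ := hG
  refine ⟨?_, ?_, coreY htf hcol hmax hXA hXB hdeg⟩
  · intro a b haX haA haB hbX hbA hbB w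
    exact ⟨coreA htf hcol hmax hXA hXB hdeg a b w haX haA haB hbX hbA hbB,
           coreA htf hcol hmax hXA hXB hdeg b a w hbX hbA hbB haX haA haB⟩
  · intro a b haX haB haA hbX hbB hbA w
    have hdeg' : ∀ v, G.Adj X v → v = B ∨ v = A := fun v h => (hdeg v h).symm
    exact ⟨coreA htf hcol hmax hXB hXA hdeg' a b w haX haB haA hbX hbB hbA,
           coreA htf hcol hmax hXB hXA hdeg' b a w hbX hbB hbA haX haB haA⟩
end

section
/- Let G be a minimal prime graph complement with a vertex X of degree 2 having neighbors A and B, and suppose |P_A| = |P_B| = |P_a| = 1 in the 5-cycle blow-up structure; i.e., every vertex of G is X, A, B, or a duplicate of X, or one of two special vertices a, b. Then G contains an induced 5-cycle. -/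
/-!
Call a vertex *special* if it is neither a neighbour nor a twin of `X`. The twins of `X` are
adjacent to both `A` and `B`, so in the complement they are only adjacent to other twins or to
special vertices; as `A` is not a twin, connectivity of the complement yields a special vertex.
Maximality forces an edge `uv` whenever `v` has at most one neighbour `n` and `u` is not adjacent
to `n`: otherwise recolouring `v` away from `u` and `n` would let `uv` be added. Hence a special
vertex is not confined to `{A, B}` and has a special neighbour, so `a` and `b` are special and
adjacent, and each of them is adjacent to `A` or `B`. Triangle-freeness puts them on opposite
sides, and `X A a b B` is a pentagon, induced because `G` is triangle-free.
-/

namespace SimpleGraph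

variable {V α : Type*} {G : SimpleGraph V} {u v n X A B c d p q : V}

theorem cliqueFree_three_sup_edge (h : G.CliqueFree 3) (huv : ∀ w, G.Adj u w → ¬ G.Adj v w) :
    (G ⊔ edge u v).CliqueFree 3 := by
  classical
  intro t ht
  have hu := h.mem_of_sup_edge_isNClique ht
  have hv := h.mem_of_sup_edge_isNClique (edge_comm u v ▸ ht)
  obtain ⟨w, hwt, hwu, hwv⟩ : ∃ w ∈ t, w ≠ u ∧ w ≠ v := by
    by_contra! hsub
    have htuv : t ⊆ {u, v} := fun w hw => by
      by_cases hwu : w = u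
      · simp [hwu]
      · simp [hsub w hw hwu]
    have := ht.card_eq ▸ (Finset.card_le_card htuv).trans Finset.card_le_two
    omega
  have hadj : ∀ x ∈ t, x ≠ w → G.Adj x w := fun x hx hxw => by
    simpa [edge_adj, hwu, hwv] using ht.1 hx hwt hxw
  exact huv w (hadj u hu hwu.symm) (hadj v hv hwv.symm)

def Coloring.supEdge (C : G.Coloring α) (h : C u ≠ C v) : (G ⊔ edge u v).Coloring α :=
  Coloring.mk C fun {x y} hxy => by
    rw [sup_adj, edge_adj] at hxy
    rcases hxy with hxy | ⟨⟨rfl, rfl⟩ | ⟨rfl, rfl⟩, -⟩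
    · exact C.valid hxy
    · exact h
    · exact h.symm

theorem exists_coloring_ne_of_neighborSet_subset_singleton (C : G.Coloring (Fin 3))
    (hv : G.neighborSet v ⊆ {n}) (huv : u ≠ v) : ∃ C' : G.Coloring (Fin 3), C' u ≠ C' v := by
  classical
  obtain ⟨k, hkn, hku⟩ : ∃ k : Fin 3, k ≠ C n ∧ k ≠ C u := by
    have : ∀ x y : Fin 3, ∃ k, k ≠ x ∧ k ≠ y := by decide
    exact this _ _
  have hvalid : ∀ {x y}, G.Adj x y → Function.update C v k x ≠ Function.update C v k y := by
    intro x y hxy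
    by_cases hx : x = v <;> by_cases hy : y = v
    · exact absurd (hx.trans hy.symm) hxy.ne
    · obtain rfl : y = n := hv (hx ▸ hxy)
      simpa [hx, hy] using hkn
    · obtain rfl : x = n := hv (hy ▸ hxy.symm)
      simpa [hx, hy] using hkn.symm
    · simpa [hx, hy] using C.valid hxy
  refine ⟨Coloring.mk _ hvalid, ?_⟩
  show Function.update C v k u ≠ Function.update C v k v
  simpa [huv] using hku.symm

theorem exists_not_adj_neighborSet_ne (hconn : Gᶜ.Preconnected) (hXA : G.Adj X A) :
    ∃ c, ¬ G.Adj X c ∧ G.neighborSet c ≠ G.neighborSet X := by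
  by_contra! htwin
  have hclosed : ∀ c, Relation.ReflTransGen Gᶜ.Adj X c → G.neighborSet c = G.neighborSet X := by
    intro c hc
    induction hc with
    | refl => rfl
    | tail _ hcd ih => exact htwin _ fun h => hcd.2 (by rwa [← mem_neighborSet, ih])
  have hA := hclosed A ((reachable_iff_reflTransGen X A).mp (hconn X A))
  exact G.irrefl (by rwa [← mem_neighborSet, hA])

theorem neighborSet_ne_of_adj (hcd : G.Adj c d) (hc : ¬ G.Adj X c) :
    G.neighborSet d ≠ G.neighborSet X := fun h =>
  hc (by rw [← mem_neighborSet, ← h]; exact hcd.symm)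

theorem nonempty_cycleGraph_five_embedding (hG : G.CliqueFree 3) (f : Fin 5 → V)
    (hadj : ∀ i, G.Adj (f i) (f (i + 1))) (hne : ∀ i, f i ≠ f (i + 2)) :
    Nonempty (cycleGraph 5 ↪g G) := by
  have hcases : ∀ i j : Fin 5, j = i + 1 ∨ i = j + 1 ∨ j = i + 2 ∨ i = j + 2 ∨ i = j := by decide
  have hcyc : ∀ i : Fin 5, (cycleGraph 5).Adj i (i + 1) ∧ ¬ (cycleGraph 5).Adj i (i + 2) := by
    decide
  have hchord : ∀ i, ¬ G.Adj (f i) (f (i + 2)) := fun i h =>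
    G.isIndepSet_neighborSet_of_triangleFree hG (f (i + 1)) (hadj i).symm
      (by simpa [add_assoc] using hadj (i + 1)) (hne i) h
  refine ⟨⟨⟨f, fun i j hij => ?_⟩, fun {i j} => ?_⟩⟩
  · rcases hcases i j with rfl | rfl | rfl | rfl | rfl
    exacts [absurd hij (hadj i).ne, absurd hij.symm (hadj j).ne, absurd hij (hne i),
      absurd hij.symm (hne j), rfl]
  · rcases hcases i j with rfl | rfl | rfl | rfl | rfl
    · exact iff_of_true (hadj i) (hcyc i).1
    · exact iff_of_true (hadj j).symm (hcyc j).1.symm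
    · exact iff_of_false (hchord i) (hcyc i).2
    · exact iff_of_false (fun h => hchord j h.symm) fun h => (hcyc j).2 h.symm
    · exact iff_of_false (G.irrefl) ((cycleGraph 5).irrefl)

theorem nonempty_cycleGraph_five_embedding_of_not_adj (hG : G.CliqueFree 3) (hAB : A ≠ B)
    (hXA : G.Adj X A) (hAp : G.Adj A p) (hpq : G.Adj p q) (hqB : G.Adj q B) (hXB : G.Adj X B)
    (hp : ¬ G.Adj X p) (hq : ¬ G.Adj X q) : Nonempty (cycleGraph 5 ↪g G) := by
  refine nonempty_cycleGraph_five_embedding hG ![X, A, p, q, B] ?_ ?_ <;> intro i <;> fin_cases i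
  exacts [hXA, hAp, hpq, hqB, hXB.symm, fun h : X = p => hq (h ▸ hpq),
    fun h : A = q => hq (h ▸ hXA), fun h : p = B => hp (h ▸ hXB),
    fun h : q = X => hp (h ▸ hpq.symm), hAB.symm]

end SimpleGraph

namespace IsMinimalPrimeGraphComplement

open SimpleGraph

variable {V : Type*} [Fintype V] {G : SimpleGraph V} {u v n X A B c p q : V}

theorem adj_of_neighborSet_subset_singleton (hG : IsMinimalPrimeGraphComplement G)
    (hv : G.neighborSet v ⊆ {n}) (hun : ¬ G.Adj u n) (huv : u ≠ v) : G.Adj u v := by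
  obtain ⟨-, hCF, ⟨C⟩, -, hmax⟩ := hG
  obtain ⟨C', hC'⟩ := exists_coloring_ne_of_neighborSet_subset_singleton C hv huv
  by_contra h
  refine hmax u v huv h ⟨cliqueFree_three_sup_edge hCF fun w hu hv' => ?_, ⟨C'.supEdge hC'⟩⟩
  exact hun (hv hv' ▸ hu)

theorem exists_adj_not_adj (hG : IsMinimalPrimeGraphComplement G)
    (hX : G.neighborSet X = {A, B}) (hc : ¬ G.Adj X c) (hcX : G.neighborSet c ≠ G.neighborSet X) :
    ∃ d, G.Adj c d ∧ ¬ G.Adj X d := by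
  by_contra! hsub
  have hcAB : ∀ d, G.Adj c d → d = A ∨ d = B := fun d hd => by
    simpa [← mem_neighborSet, hX] using hsub d hd
  have hXA : G.Adj X A := by simp [← mem_neighborSet, hX]
  have hXB : G.Adj X B := by simp [← mem_neighborSet, hX]
  have hAB : ¬ G.Adj A B := fun h =>
    G.isIndepSet_neighborSet_of_triangleFree hG.2.1 X hXA hXB h.ne h
  have hXc : X ≠ c := fun h => hcX (h ▸ rfl)
  by_cases hcA : G.Adj c A <;> by_cases hcB : G.Adj c B
  · refine hcX (Set.Subset.antisymm hsub ?_)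
    rw [hX]
    rintro _ (rfl | rfl)
    exacts [hcA, hcB]
  · refine hcB (hG.adj_of_neighborSet_subset_singleton (n := A) (fun d hd => ?_)
      (fun h => hAB h.symm) fun h : B = c => hc (h ▸ hXB)).symm
    exact (hcAB d hd).resolve_right fun h => hcB (h ▸ hd)
  · refine hcA (hG.adj_of_neighborSet_subset_singleton (n := B) (fun d hd => ?_)
      hAB fun h : A = c => hc (h ▸ hXA)).symm
    exact (hcAB d hd).resolve_left fun h => hcA (h ▸ hd)
  · refine hc (hG.adj_of_neighborSet_subset_singleton (n := c) (fun d hd => ?_) hc hXc)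
    rcases hcAB d hd with rfl | rfl
    exacts [absurd hd hcA, absurd hd hcB]

theorem adj_or_adj_of_forall_eq_or_eq (hG : IsMinimalPrimeGraphComplement G)
    (hX : G.neighborSet X = {A, B}) (hp : ¬ G.Adj X p) (hpX : G.neighborSet p ≠ G.neighborSet X)
    (hq : ¬ G.Adj X q)
    (hcov : ∀ w, ¬ G.Adj X w → G.neighborSet w ≠ G.neighborSet X → w = p ∨ w = q) :
    G.Adj p A ∨ G.Adj p B := by
  by_contra! hpAB
  refine hp (hG.adj_of_neighborSet_subset_singleton (n := q) (fun w hw => ?_) hq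
    fun h => hpX (h ▸ rfl))
  by_cases hXw : G.Adj X w
  · rw [← mem_neighborSet, hX] at hXw
    rcases hXw with rfl | rfl
    exacts [absurd hw hpAB.1, absurd hw hpAB.2]
  · exact (hcov w hXw (neighborSet_ne_of_adj hw hp)).resolve_left (G.ne_of_adj hw).symm

end IsMinimalPrimeGraphComplement

open SimpleGraph in
theorem induced_five_cycle {V : Type*} [Fintype V] (G : SimpleGraph V)
    (hG : IsMinimalPrimeGraphComplement G) (X A B : V)
    (hXA : G.Adj X A) (hXB : G.Adj X B) (hAB : A ≠ B)
    (hdeg : ∀ v, G.Adj X v → v = A ∨ v = B)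
    (a b : V)
    (hcover : ∀ v : V, v = A ∨ v = B ∨ v = a ∨ v = b ∨ (∀ w : V, G.Adj v w ↔ G.Adj X w)) :
    Nonempty (SimpleGraph.cycleGraph 5 ↪g G) := by
  have hX : G.neighborSet X = {A, B} :=
    Set.ext fun w => ⟨hdeg w, by rintro (rfl | rfl) <;> assumption⟩
  have hab : ∀ w, ¬ G.Adj X w → G.neighborSet w ≠ G.neighborSet X → w = a ∨ w = b := by
    intro w hw hwX
    rcases hcover w with rfl | rfl | h | h | h
    exacts [absurd hXA hw, absurd hXB hw, .inl h, .inr h, absurd (Set.ext h) hwX]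
  obtain ⟨p, hp, hpX⟩ := exists_not_adj_neighborSet_ne hG.2.2.2.1.preconnected hXA
  obtain ⟨q, hpq, hq⟩ := hG.exists_adj_not_adj hX hp hpX
  have hqX := neighborSet_ne_of_adj hpq hp
  have hcov : ∀ w, ¬ G.Adj X w → G.neighborSet w ≠ G.neighborSet X → w = p ∨ w = q := by
    intro w hw hwX
    have hpq_ne := hpq.ne
    rcases hab p hp hpX with rfl | rfl <;> rcases hab q hq hqX with rfl | rfl <;>
      rcases hab w hw hwX with rfl | rfl <;> simp_all
  have hpAB := hG.adj_or_adj_of_forall_eq_or_eq hX hp hpX hq hcov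
  have hqAB := hG.adj_or_adj_of_forall_eq_or_eq hX hq hqX hp fun w hw hwX => (hcov w hw hwX).symm
  have hCF := hG.2.1
  have hnot : ∀ {w}, G.Adj p w → ¬ G.Adj q w := fun hpw hqw =>
    G.isIndepSet_neighborSet_of_triangleFree hCF _ hpw.symm hqw.symm hpq.ne hpq
  rcases hpAB with hpA | hpB
  · exact nonempty_cycleGraph_five_embedding_of_not_adj hCF hAB hXA hpA.symm hpq
      (hqAB.resolve_left (hnot hpA)) hXB hp hq
  · exact nonempty_cycleGraph_five_embedding_of_not_adj hCF hAB hXA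
      (hqAB.resolve_right (hnot hpB)).symm hpq.symm hpB hXB hq hp
end
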